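/- If Γ is a graph on n vertices with Seidel matrix S, then the Seidel energy S(Γ) (the sum of the absolute values of the eigenvalues of S) satisfies S(Γ) ≤ n√(n-1), with equality if and only if S is a conference matrix, i.e., S² = (n-1)I. -/

import Mathlib

/-!
Since `S` has zero diagonal and `±1` entries elsewhere, `∑ θᵢ² = tr S² = n(n-1)`, and
Cauchy–Schwarz bounds `∑ |θᵢ|` by `n√(n-1)`. For the equality case, completing the square gives
`∑ (|θᵢ| - √(n-1))² = 2√(n-1) (n√(n-1) - ∑ |θᵢ|)`, so equality holds exactly when every `θᵢ² = n-1`;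
diagonalizing `S` shows this means `S² = (n-1) I`.
-/

open Finset Matrix Unitary

theorem sum_abs_le_card_mul_sqrt {ι : Type*} [Fintype ι] {a : ι → ℝ} {c : ℝ}
    (h : ∑ i, a i ^ 2 = Fintype.card ι * c) : ∑ i, |a i| ≤ Fintype.card ι * √c := by
  have hcs := sq_sum_le_card_mul_sum_sq (s := univ) (f := fun i ↦ |a i|)
  simp only [sq_abs, h, card_univ] at hcs
  calc ∑ i, |a i| ≤ √((Fintype.card ι : ℝ) ^ 2 * c) :=
        Real.le_sqrt_of_sq_le (by linarith)
    _ = Fintype.card ι * √c := by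
        rw [Real.sqrt_mul (by positivity), Real.sqrt_sq (by positivity)]

theorem sum_abs_eq_card_mul_sqrt_iff {ι : Type*} [Fintype ι] {a : ι → ℝ} {c : ℝ}
    (h : ∑ i, a i ^ 2 = Fintype.card ι * c) :
    ∑ i, |a i| = Fintype.card ι * √c ↔ ∀ i, a i ^ 2 = c := by
  rcases isEmpty_or_nonempty ι with _ | _
  · simp
  have hc : 0 ≤ c := by
    have : 0 ≤ (Fintype.card ι : ℝ) * c := h ▸ sum_nonneg fun i _ ↦ sq_nonneg (a i)
    exact nonneg_of_mul_nonneg_right this (by positivity)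
  have key : ∑ i, (|a i| - √c) ^ 2 = 2 * √c * (Fintype.card ι * √c - ∑ i, |a i|) := by
    have hsq : √c ^ 2 = c := Real.sq_sqrt hc
    simp only [sub_sq, sum_add_distrib, sum_sub_distrib, sq_abs, h, ← sum_mul, ← mul_sum,
      sum_const, card_univ, nsmul_eq_mul, hsq]
    linear_combination (-(2 : ℝ)) * Fintype.card ι * hsq
  constructor
  · intro hE
    have hzero := (sum_eq_zero_iff_of_nonneg fun i _ ↦ sq_nonneg (|a i| - √c)).mp
      (by rw [key, hE, sub_self, mul_zero])
    intro i
    rw [← sq_abs, sub_eq_zero.mp (pow_eq_zero_iff two_ne_zero |>.mp (hzero i (mem_univ i))),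
      Real.sq_sqrt hc]
  · intro hall
    have : ∀ i, |a i| = √c := fun i ↦ by rw [← Real.sqrt_sq_eq_abs, hall i]
    simp [this]

namespace Matrix.IsHermitian

variable {𝕜 n : Type*} [RCLike 𝕜] [Fintype n] [DecidableEq n] {A : Matrix n n 𝕜}
  (hA : A.IsHermitian)

theorem mul_self_eq_conj_diagonal_sq :
    A * A = conjStarAlgAut 𝕜 _ hA.eigenvectorUnitary
      (diagonal fun i ↦ (hA.eigenvalues i : 𝕜) ^ 2) := by
  conv_lhs => rw [hA.spectral_theorem]
  rw [← map_mul, diagonal_mul_diagonal]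
  simp [sq]

theorem trace_mul_self : (A * A).trace = ∑ i, (hA.eigenvalues i : 𝕜) ^ 2 := by
  rw [hA.mul_self_eq_conj_diagonal_sq, conjStarAlgAut_apply, trace_mul_cycle,
    coe_star_mul_self, one_mul, trace_diagonal]

theorem sum_sq_eigenvalues : ∑ i, hA.eigenvalues i ^ 2 = RCLike.re (A * A).trace := by
  simp only [hA.trace_mul_self, map_sum, ← RCLike.ofReal_pow, RCLike.ofReal_re]

theorem mul_self_eq_smul_one_iff (c : ℝ) :
    A * A = c • (1 : Matrix n n 𝕜) ↔ ∀ i, hA.eigenvalues i ^ 2 = c := by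
  have : c • (1 : Matrix n n 𝕜) = conjStarAlgAut 𝕜 _ hA.eigenvectorUnitary (c • 1) := by
    simp
  rw [hA.mul_self_eq_conj_diagonal_sq, this, EmbeddingLike.apply_eq_iff_eq,
    ← diagonal_one, ← diagonal_smul, diagonal_eq_diagonal_iff]
  simp only [Pi.smul_apply, RCLike.real_smul_eq_coe_smul (K := 𝕜), smul_eq_mul, mul_one]
  norm_cast

end Matrix.IsHermitian

namespace SimpleGraph

variable {V : Type*} [DecidableEq V] (G : SimpleGraph V) [DecidableRel G.Adj]

def seidelMatrix : Matrix V V ℝ :=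
  Matrix.of fun i j ↦ if i = j then 0 else if G.Adj i j then -1 else 1

theorem seidelMatrix_apply (i j : V) :
    G.seidelMatrix i j = if i = j then 0 else if G.Adj i j then -1 else 1 := rfl

variable [Fintype V]

theorem seidelMatrix_mul_self_apply_self (i : V) :
    (G.seidelMatrix * G.seidelMatrix) i i = Fintype.card V - 1 := by
  have hentry : ∀ j, G.seidelMatrix i j * G.seidelMatrix j i = 1 - if i = j then 1 else 0 := by
    intro j
    by_cases hij : i = j
    · simp [seidelMatrix_apply, hij]
    · by_cases hadj : G.Adj i j <;> simp [seidelMatrix_apply, hij, Ne.symm hij, hadj, G.adj_comm]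
  simp [mul_apply, hentry, sum_sub_distrib]

theorem trace_seidelMatrix_mul_self :
    (G.seidelMatrix * G.seidelMatrix).trace = Fintype.card V * (Fintype.card V - 1) := by
  simp [trace, seidelMatrix_mul_self_apply_self, mul_sub]

end SimpleGraph

/-- Haemers: The Seidel energy of a graph Γ on n vertices (the sum of the
absolute values of the eigenvalues of its Seidel matrix S) is at most n√(n-1), with
equality if and only if S is a conference matrix, i.e. S² = (n-1)·I. -/
theorem stmt_12 {n : ℕ} (G : SimpleGraph (Fin n)) [DecidableRel G.Adj]
    (S : Matrix (Fin n) (Fin n) ℝ)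
    (hS : ∀ i j, S i j = if i = j then 0 else if G.Adj i j then -1 else 1)
    (hH : S.IsHermitian)
    (energy : ℝ) (henergy : energy = ∑ i, |hH.eigenvalues i|) :
    energy ≤ n * Real.sqrt (n - 1) ∧
      (energy = n * Real.sqrt (n - 1) ↔
        S * S = ((n : ℝ) - 1) • (1 : Matrix (Fin n) (Fin n) ℝ)) := by
  have hSG : S = G.seidelMatrix := Matrix.ext hS
  have hsq : ∑ i, hH.eigenvalues i ^ 2 = Fintype.card (Fin n) * ((n : ℝ) - 1) := by
    rw [hH.sum_sq_eigenvalues, hSG, G.trace_seidelMatrix_mul_self, Fintype.card_fin,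
      RCLike.re_to_real]
  have hle := sum_abs_le_card_mul_sqrt hsq
  have heq := sum_abs_eq_card_mul_sqrt_iff hsq
  rw [Fintype.card_fin] at hle heq
  rw [henergy, hH.mul_self_eq_smul_one_iff]
  exact ⟨hle, heq⟩
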